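/- If F and G are cumulative distribution functions on [0,∞) with F ≤ G pointwise and F ≢ G, then there exist η₀ > 0 and a nondegenerate closed interval H ⊂ (0,1) such that for all s ∈ H, F⁻¹(s) − G⁻¹(s) ≥ η₀, where φ⁻¹(s) := sup{t ≥ 0 : φ(t) < s} (with sup ∅ := 0) denotes the pseudo-inverse. -/
import Mathlib


/-- Pseudo-inverse of a distribution function: `φ⁻¹(s) = sup {t ≥ 0 : φ t < s}`,
with the convention `sup ∅ = 0` (which is `Real.sSup`'s junk value). -/
noncomputable def pinv (φ : ℝ → ℝ) (s : ℝ) : ℝ := sSup {t : ℝ | 0 ≤ t ∧ φ t < s}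

theorem pseudo_inverse_gap
    (F G : ℝ → ℝ)
    (hFmono : MonotoneOn F (Set.Ici 0)) (hGmono : MonotoneOn G (Set.Ici 0))
    (hFrc : ∀ t ∈ Set.Ici (0:ℝ), ContinuousWithinAt F (Set.Ici t) t)
    (hGrc : ∀ t ∈ Set.Ici (0:ℝ), ContinuousWithinAt G (Set.Ici t) t)
    (hF01 : ∀ t ∈ Set.Ici (0:ℝ), F t ∈ Set.Icc (0:ℝ) 1)
    (hG01 : ∀ t ∈ Set.Ici (0:ℝ), G t ∈ Set.Icc (0:ℝ) 1)
    (hFlim : Filter.Tendsto F Filter.atTop (nhds 1))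
    (hGlim : Filter.Tendsto G Filter.atTop (nhds 1))
    (hle : ∀ t ∈ Set.Ici (0:ℝ), F t ≤ G t)
    (hne : ∃ t ∈ Set.Ici (0:ℝ), F t ≠ G t) :
    ∃ η₀ > (0:ℝ), ∃ a b : ℝ, 0 < a ∧ a < b ∧ b < 1 ∧
      ∀ s ∈ Set.Icc a b, pinv F s - pinv G s ≥ η₀ := by
  obtain ⟨t₀, ht₀, hFG⟩ := hne
  have hlt : F t₀ < G t₀ := lt_of_le_of_ne (hle t₀ ht₀) hFG
  set a : ℝ := F t₀ + (G t₀ - F t₀)/3 with ha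
  set b : ℝ := G t₀ - (G t₀ - F t₀)/3 with hb
  have hFa : F t₀ < a := by rw [ha]; linarith
  have hab : a < b := by rw [ha, hb]; linarith
  have hbG : b < G t₀ := by rw [hb]; linarith
  have ha0 : 0 < a := lt_of_le_of_lt (hF01 t₀ ht₀).1 hFa
  have hb1 : b < 1 := lt_of_lt_of_le hbG (hG01 t₀ ht₀).2
  -- get u > t₀ with F u < a, by right-continuity
  have hev : ∀ᶠ x in nhdsWithin t₀ (Set.Ici t₀), F x < a :=
    Filter.Tendsto.eventually_lt_const hFa (hFrc t₀ ht₀)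
  have hev' : ∀ᶠ x in nhdsWithin t₀ (Set.Ioi t₀), x ∈ Set.Ioi t₀ ∧ F x < a :=
    (eventually_mem_nhdsWithin).and
      (hev.filter_mono (nhdsWithin_mono t₀ Set.Ioi_subset_Ici_self))
  obtain ⟨u, hu, hFu⟩ := hev'.exists
  -- get T with F t > b for t ≥ T
  obtain ⟨T, hT⟩ := Filter.eventually_atTop.mp
    (hFlim.eventually (eventually_gt_nhds hb1))
  refine ⟨u - t₀, by simp [sub_pos]; exact hu, a, b, ha0, hab, hb1, ?_⟩
  intro s hs
  have hBdd : BddAbove {t : ℝ | 0 ≤ t ∧ F t < s} := by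
    refine ⟨T, fun x hx => ?_⟩
    by_contra h
    push_neg at h
    have := hT x h.le
    have := hx.2
    linarith [hs.2]
  have h1 : u ≤ pinv F s :=
    le_csSup hBdd ⟨le_of_lt (lt_of_le_of_lt ht₀ hu), lt_of_lt_of_le hFu hs.1⟩
  have h2 : pinv G s ≤ t₀ := by
    refine Real.sSup_le (fun x hx => ?_) ht₀
    by_contra h
    push_neg at h
    have : G t₀ ≤ G x := hGmono ht₀ (le_trans ht₀ h.le) h.le
    have : G x < s := hx.2
    linarith [hs.2]
  have : pinv F s - pinv G s ≥ u - t₀ := by linarith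
  exact this
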